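/- Let N ≥ 2, 1/2 < s < 1. The function E(x) = |x|^{-(N−2s)} has finite Gagliardo seminorm of order η = 1 − (2−2s)/q with exponent q over the unit ball, i.e. ∬_{B_1×B_1} |E(x)−E(y)|^q / |x−y|^{N+ηq} dx dy < ∞, for every q < (N+2−2s)/(N+1−2s). -/

import Mathlib

/-!
Interpolating between the trivial bound `b^{-α} - a^{-α} ≤ b^{-α}` and the mean value bound
`b^{-α} - a^{-α} ≤ α (a - b) b^{-α-1}` (for `0 < b ≤ a`) gives, for any `θ ∈ [0, 1]`,
`|E(x) - E(y)| ≲ |x - y|^θ (|x|^{-α-θ} + |y|^{-α-θ})` with `E = |·|^{-α}`. Taking `θ` slightly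
larger than the order `η`, the Gagliardo integrand is dominated by
`|x - y|^{(θ-η)q - N} (|x|^{-(α+θ)q} + |y|^{-(α+θ)q})`. Both powers are locally integrable as
soon as `(α + θ) q < N`, and such a `θ` exists exactly when `(α + η) q < N`, which for
`α = N - 2s`, `η = 1 - (2 - 2s)/q` is the condition `q < (N + 2 - 2s)/(N + 1 - 2s)`.
-/

open MeasureTheory Metric Set Module

theorem min_le_rpow_mul_rpow {P Q θ : ℝ} (hP : 0 ≤ P) (hQ : 0 ≤ Q) (hθ₀ : 0 ≤ θ)
    (hθ₁ : θ ≤ 1) : min P Q ≤ P ^ (1 - θ) * Q ^ θ := by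
  have hm : 0 ≤ min P Q := le_min hP hQ
  calc min P Q = min P Q ^ (1 - θ) * min P Q ^ θ := by
        rw [← Real.rpow_add' hm (by norm_num), sub_add_cancel, Real.rpow_one]
    _ ≤ P ^ (1 - θ) * Q ^ θ := by
        gcongr ?_ * ?_
        · exact Real.rpow_le_rpow hm (min_le_left P Q) (sub_nonneg.2 hθ₁)
        · exact Real.rpow_le_rpow hm (min_le_right P Q) hθ₀

theorem rpow_neg_sub_rpow_neg_le {α a b : ℝ} (hα : 0 < α) (hb : 0 < b) (hba : b ≤ a) :
    b ^ (-α) - a ^ (-α) ≤ α * (a - b) * b ^ (-α - 1) := by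
  have hderiv : ∀ t ∈ Icc b a, HasDerivWithinAt (fun t : ℝ => t ^ (-α))
      (-α * t ^ (-α - 1)) (Icc b a) t := fun t ht =>
    (Real.hasDerivAt_rpow_const (Or.inl (hb.trans_le ht.1).ne')).hasDerivWithinAt
  have hbound : ∀ t ∈ Ico b a, ‖-α * t ^ (-α - 1)‖ ≤ α * b ^ (-α - 1) := fun t ht => by
    have ht₀ : 0 < t := hb.trans_le ht.1
    rw [norm_mul, norm_neg, Real.norm_of_nonneg hα.le,
      Real.norm_of_nonneg (Real.rpow_nonneg ht₀.le _)]
    exact mul_le_mul_of_nonneg_left (Real.rpow_le_rpow_of_nonpos hb ht.1 (by linarith)) hα.le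
  have hmvt := norm_image_sub_le_of_norm_deriv_le_segment' hderiv hbound a ⟨hba, le_rfl⟩
  rw [Real.norm_eq_abs, abs_sub_comm] at hmvt
  linarith [le_abs_self (b ^ (-α) - a ^ (-α))]

theorem rpow_neg_sub_rpow_neg_le_max_mul {α θ a b : ℝ} (hα : 0 < α) (hθ₀ : 0 ≤ θ)
    (hθ₁ : θ ≤ 1) (hb : 0 < b) (hba : b ≤ a) :
    b ^ (-α) - a ^ (-α) ≤ max α 1 * ((a - b) ^ θ * b ^ (-α - θ)) := by
  have hab : 0 ≤ a - b := sub_nonneg.2 hba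
  have hmin : b ^ (-α) - a ^ (-α) ≤ min (b ^ (-α)) (α * (a - b) * b ^ (-α - 1)) :=
    le_min (sub_le_self _ (Real.rpow_nonneg (hb.le.trans hba) _))
      (rpow_neg_sub_rpow_neg_le hα hb hba)
  have hαθ : α ^ θ ≤ max α 1 := by
    rcases le_total α 1 with h | h
    · exact (Real.rpow_le_one hα.le h hθ₀).trans (le_max_right _ _)
    · exact (Real.rpow_le_self_of_one_le h hθ₁).trans (le_max_left _ _)
  calc b ^ (-α) - a ^ (-α)
      ≤ (b ^ (-α)) ^ (1 - θ) * (α * (a - b) * b ^ (-α - 1)) ^ θ :=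
        hmin.trans (min_le_rpow_mul_rpow (by positivity) (by positivity) hθ₀ hθ₁)
    _ = α ^ θ * ((a - b) ^ θ * b ^ (-α - θ)) := by
        rw [Real.mul_rpow (by positivity) (by positivity), Real.mul_rpow hα.le hab,
          ← Real.rpow_mul hb.le, ← Real.rpow_mul hb.le,
          show -α - θ = -α * (1 - θ) + (-α - 1) * θ by ring, Real.rpow_add hb]
        ring
    _ ≤ max α 1 * ((a - b) ^ θ * b ^ (-α - θ)) := by gcongr

theorem abs_rpow_neg_sub_rpow_neg_rpow_le {α θ q a b : ℝ} (hα : 0 < α) (hθ₀ : 0 ≤ θ)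
    (hθ₁ : θ ≤ 1) (hq : 0 < q) (ha : 0 ≤ a) (hb : 0 ≤ b) :
    |a ^ (-α) - b ^ (-α)| ^ q
      ≤ max α 1 ^ q * (|a - b| ^ (θ * q) * (a ^ (-((α + θ) * q)) + b ^ (-((α + θ) * q)))) := by
  wlog hba : b ≤ a generalizing a b
  · have := this hb ha (le_of_not_ge hba)
    rwa [abs_sub_comm, abs_sub_comm b, add_comm] at this
  have hC : 1 ≤ max α 1 ^ q := Real.one_le_rpow (le_max_right _ _) hq.le
  rcases hb.eq_or_lt with rfl | hb
  -- `0 ^ (-α) = 0` in Lean, so this case is not a limit of the other one.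
  · rw [Real.zero_rpow (neg_ne_zero.2 hα.ne'), sub_zero, sub_zero,
      abs_of_nonneg (Real.rpow_nonneg ha _), abs_of_nonneg ha,
      Real.zero_rpow (neg_ne_zero.2 (by positivity)), add_zero,
      ← Real.rpow_add' ha (by nlinarith), ← Real.rpow_mul ha,
      show θ * q + -((α + θ) * q) = -α * q by ring]
    exact le_mul_of_one_le_left (by positivity) hC
  · have hdiff : 0 ≤ b ^ (-α) - a ^ (-α) :=
      sub_nonneg.2 (Real.rpow_le_rpow_of_nonpos hb hba (by linarith))
    calc |a ^ (-α) - b ^ (-α)| ^ q = (b ^ (-α) - a ^ (-α)) ^ q := by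
          rw [abs_sub_comm, abs_of_nonneg hdiff]
      _ ≤ (max α 1 * ((a - b) ^ θ * b ^ (-α - θ))) ^ q := by
          gcongr
          exact rpow_neg_sub_rpow_neg_le_max_mul hα hθ₀ hθ₁ hb hba
      _ = max α 1 ^ q * (|a - b| ^ (θ * q) * b ^ (-((α + θ) * q))) := by
          rw [Real.mul_rpow (by positivity) (by positivity),
            Real.mul_rpow (by positivity) (by positivity), abs_of_nonneg (sub_nonneg.2 hba),
            Real.rpow_mul (sub_nonneg.2 hba), ← Real.rpow_mul hb.le]
          ring_nf
      _ ≤ _ := by gcongr; exact le_add_of_nonneg_left (by positivity)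

theorem abs_norm_rpow_neg_sub_rpow_div_le {F : Type*} [SeminormedAddCommGroup F]
    {α θ η q d : ℝ} (hα : 0 < α) (hθ₀ : 0 ≤ θ) (hθ₁ : θ ≤ 1) (hq : 0 < q) (x y : F) :
    |‖x‖ ^ (-α) - ‖y‖ ^ (-α)| ^ q / ‖x - y‖ ^ (d + η * q)
      ≤ max α 1 ^ q * (‖x - y‖ ^ ((θ - η) * q - d) *
        (‖x‖ ^ (-((α + θ) * q)) + ‖y‖ ^ (-((α + θ) * q)))) := by
  rcases (norm_nonneg (x - y)).eq_or_lt with hxy | hxy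
  · have hnorm : ‖x‖ = ‖y‖ := by
      have := abs_norm_sub_norm_le x y
      rwa [← hxy, abs_nonpos_iff, sub_eq_zero] at this
    rw [hnorm, sub_self, abs_zero, Real.zero_rpow hq.ne', zero_div]
    positivity
  rw [div_le_iff₀ (by positivity)]
  calc |‖x‖ ^ (-α) - ‖y‖ ^ (-α)| ^ q
      ≤ max α 1 ^ q * (|‖x‖ - ‖y‖| ^ (θ * q) *
          (‖x‖ ^ (-((α + θ) * q)) + ‖y‖ ^ (-((α + θ) * q)))) :=
        abs_rpow_neg_sub_rpow_neg_rpow_le hα hθ₀ hθ₁ hq (norm_nonneg x) (norm_nonneg y)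
    _ ≤ max α 1 ^ q * (‖x - y‖ ^ (θ * q) *
          (‖x‖ ^ (-((α + θ) * q)) + ‖y‖ ^ (-((α + θ) * q)))) := by
        gcongr
        exact abs_norm_sub_norm_le x y
    _ = _ := by
        rw [show θ * q = (θ - η) * q - d + (d + η * q) by ring, Real.rpow_add hxy]
        ring

theorem lintegral_ball_norm_sub_rpow_le {G : Type*} [NormedAddCommGroup G] [MeasurableSpace G]
    [BorelSpace G] {μ : Measure G} [μ.IsAddRightInvariant] {r : ℝ} {x : G}
    (hx : x ∈ ball 0 r) (c : ℝ) :
    ∫⁻ y in ball 0 r, ENNReal.ofReal (‖x - y‖ ^ c) ∂μ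
      ≤ ∫⁻ z in ball 0 (2 * r), ENNReal.ofReal (‖z‖ ^ c) ∂μ := by
  set F := (ball (0 : G) (2 * r)).indicator fun z => ENNReal.ofReal (‖z‖ ^ c)
  have hF : ∀ y ∈ ball (0 : G) r, ENNReal.ofReal (‖x - y‖ ^ c) = F (y - x) := by
    intro y hy
    simp only [F]
    rw [indicator_of_mem, norm_sub_rev]
    rw [mem_ball_zero_iff] at hx hy ⊢
    linarith [norm_sub_le y x]
  calc ∫⁻ y in ball 0 r, ENNReal.ofReal (‖x - y‖ ^ c) ∂μ
      = ∫⁻ y in ball 0 r, F (y - x) ∂μ := setLIntegral_congr_fun measurableSet_ball hF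
    _ ≤ ∫⁻ y, F (y - x) ∂μ := setLIntegral_le_lintegral _ _
    _ = ∫⁻ z in ball 0 (2 * r), ENNReal.ofReal (‖z‖ ^ c) ∂μ := by
      rw [lintegral_sub_right_eq_self, lintegral_indicator measurableSet_ball]

section AddHaar

variable {E : Type*} [NormedAddCommGroup E] [NormedSpace ℝ E] [FiniteDimensional ℝ E]
  [MeasurableSpace E] [BorelSpace E] {μ : Measure E} [μ.IsAddHaarMeasure]

theorem lintegral_ball_norm_rpow_lt_top (hd : 1 ≤ finrank ℝ E) {c : ℝ}
    (hc : -(finrank ℝ E : ℝ) < c) (r : ℝ) :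
    ∫⁻ x in ball 0 r, ENNReal.ofReal (‖x‖ ^ c) ∂μ < ⊤ :=
  (integrableOn_ball_of_norm_le_rpow hd (C := 1) (α := -c) (by linarith)
    (Filter.Eventually.of_forall fun x => by
      rw [one_mul, neg_neg, Real.norm_of_nonneg (Real.rpow_nonneg (norm_nonneg x) c)])
    (measurable_norm.pow_const c).aestronglyMeasurable).lintegral_lt_top

theorem lintegral_ball_prod_norm_sub_rpow_mul_norm_rpow_lt_top (hd : 1 ≤ finrank ℝ E)
    {a b : ℝ} (ha : -(finrank ℝ E : ℝ) < a) (hb : -(finrank ℝ E : ℝ) < b) (r : ℝ) :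
    ∫⁻ p in ball 0 r ×ˢ ball 0 r, ENNReal.ofReal (‖p.1 - p.2‖ ^ a) * ENNReal.ofReal (‖p.1‖ ^ b)
      ∂μ.prod μ < ⊤ := by
  set M := ∫⁻ z in ball 0 (2 * r), ENNReal.ofReal (‖z‖ ^ a) ∂μ
  have hM : M < ⊤ := lintegral_ball_norm_rpow_lt_top hd ha _
  rw [← Measure.prod_restrict, lintegral_prod _ (by fun_prop)]
  calc ∫⁻ x in ball 0 r, ∫⁻ y in ball 0 r,
        ENNReal.ofReal (‖x - y‖ ^ a) * ENNReal.ofReal (‖x‖ ^ b) ∂μ ∂μ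
      ≤ ∫⁻ x in ball 0 r, M * ENNReal.ofReal (‖x‖ ^ b) ∂μ := by
        refine setLIntegral_mono' measurableSet_ball fun x hx => ?_
        rw [lintegral_mul_const' _ _ ENNReal.ofReal_ne_top]
        exact mul_le_mul_left (lintegral_ball_norm_sub_rpow_le hx a) _
    _ = M * ∫⁻ x in ball 0 r, ENNReal.ofReal (‖x‖ ^ b) ∂μ := lintegral_const_mul' _ _ hM.ne
    _ < ⊤ := ENNReal.mul_lt_top hM (lintegral_ball_norm_rpow_lt_top hd hb r)

theorem lintegral_ball_prod_norm_sub_rpow_mul_add_lt_top (hd : 1 ≤ finrank ℝ E) {a b : ℝ}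
    (ha : -(finrank ℝ E : ℝ) < a) (hb : -(finrank ℝ E : ℝ) < b) (r : ℝ) :
    ∫⁻ p in ball 0 r ×ˢ ball 0 r, ENNReal.ofReal (‖p.1 - p.2‖ ^ a) *
      (ENNReal.ofReal (‖p.1‖ ^ b) + ENNReal.ofReal (‖p.2‖ ^ b)) ∂μ.prod μ < ⊤ := by
  have hswap : ∫⁻ p in ball 0 r ×ˢ ball 0 r,
      ENNReal.ofReal (‖p.1 - p.2‖ ^ a) * ENNReal.ofReal (‖p.2‖ ^ b) ∂μ.prod μ
      = ∫⁻ p in ball 0 r ×ˢ ball 0 r,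
      ENNReal.ofReal (‖p.1 - p.2‖ ^ a) * ENNReal.ofReal (‖p.1‖ ^ b) ∂μ.prod μ := by
    rw [← Measure.prod_restrict, ← lintegral_prod_swap]
    simp only [Prod.fst_swap, Prod.snd_swap, norm_sub_rev]
  have hfinite := lintegral_ball_prod_norm_sub_rpow_mul_norm_rpow_lt_top (μ := μ) hd ha hb r
  simp_rw [mul_add]
  rw [lintegral_add_left' (by fun_prop), hswap]
  exact ENNReal.add_lt_top.2 ⟨hfinite, hfinite⟩

theorem lintegral_gagliardo_norm_rpow_neg_lt_top (hd : 1 ≤ finrank ℝ E) {α η q : ℝ}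
    (hα : 0 < α) (hη₀ : 0 ≤ η) (hη₁ : η < 1) (hq : 0 < q)
    (hαηq : (α + η) * q < finrank ℝ E) (r : ℝ) :
    ∫⁻ p in ball 0 r ×ˢ ball 0 r,
      ENNReal.ofReal (|‖p.1‖ ^ (-α) - ‖p.2‖ ^ (-α)| ^ q /
        ‖p.1 - p.2‖ ^ ((finrank ℝ E : ℝ) + η * q)) ∂μ.prod μ < ⊤ := by
  set d : ℝ := (finrank ℝ E : ℝ)
  -- `θ > η` makes the kernel `‖x - y‖ ^ ((θ - η) q - d)` integrable, `(α + θ) q < d` the weight.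
  obtain ⟨θ, hηθ, hθ⟩ : ∃ θ, η < θ ∧ θ < min 1 (d / q - α) :=
    exists_between (lt_min hη₁ (by rw [lt_sub_iff_add_lt', lt_div_iff₀ hq]; linarith))
  have hθ₁ : θ ≤ 1 := (hθ.trans_le (min_le_left _ _)).le
  have hγ : (α + θ) * q < d := by
    have := hθ.trans_le (min_le_right _ _)
    rwa [lt_sub_iff_add_lt', lt_div_iff₀ hq] at this
  calc _ ≤ ∫⁻ p in ball 0 r ×ˢ ball 0 r, ENNReal.ofReal (max α 1 ^ q) *
          (ENNReal.ofReal (‖p.1 - p.2‖ ^ ((θ - η) * q - d)) *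
            (ENNReal.ofReal (‖p.1‖ ^ (-((α + θ) * q))) +
              ENNReal.ofReal (‖p.2‖ ^ (-((α + θ) * q))))) ∂μ.prod μ := by
        refine lintegral_mono fun p => ?_
        rw [← ENNReal.ofReal_add (by positivity) (by positivity),
          ← ENNReal.ofReal_mul (by positivity), ← ENNReal.ofReal_mul (by positivity)]
        exact ENNReal.ofReal_le_ofReal
          (abs_norm_rpow_neg_sub_rpow_div_le hα (hη₀.trans hηθ.le) hθ₁ hq p.1 p.2)
    _ < ⊤ := by
        rw [lintegral_const_mul' _ _ ENNReal.ofReal_ne_top]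
        exact ENNReal.mul_lt_top ENNReal.ofReal_lt_top
          (lintegral_ball_prod_norm_sub_rpow_mul_add_lt_top hd (by nlinarith) (by linarith) r)

end AddHaar

/-- finiteness of the Gagliardo seminorm of `|x|^{-(N−2s)}` on the unit ball. -/
theorem statement16 (N : ℕ) (hN : 2 ≤ N) (s : ℝ) (hs1 : 1 / 2 < s) (hs2 : s < 1)
    (q : ℝ) (hq1 : 1 ≤ q) (hq2 : q < ((N : ℝ) + 2 - 2 * s) / ((N : ℝ) + 1 - 2 * s)) :
    ∫⁻ p in (Metric.ball (0 : EuclideanSpace ℝ (Fin N)) 1) ×ˢ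
        (Metric.ball (0 : EuclideanSpace ℝ (Fin N)) 1),
      ENNReal.ofReal
        (|‖p.1‖ ^ (-((N : ℝ) - 2 * s)) - ‖p.2‖ ^ (-((N : ℝ) - 2 * s))| ^ q /
          ‖p.1 - p.2‖ ^ ((N : ℝ) + (1 - (2 - 2 * s) / q) * q)) < ⊤ := by
  have hN' : (2 : ℝ) ≤ N := by exact_mod_cast hN
  have hq : 0 < q := one_pos.trans_le hq1
  have hfinrank : finrank ℝ (EuclideanSpace ℝ (Fin N)) = N := finrank_euclideanSpace_fin
  have hαηq : ((N - 2 * s) + (1 - (2 - 2 * s) / q)) * q < N := by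
    rw [lt_div_iff₀ (by linarith)] at hq2
    have : ((N - 2 * s) + (1 - (2 - 2 * s) / q)) * q = q * (N + 1 - 2 * s) - (2 - 2 * s) := by
      field_simp
      ring
    linarith
  have hη₀ : 0 ≤ 1 - (2 - 2 * s) / q := by
    rw [sub_nonneg, div_le_one hq]
    linarith
  have hη₁ : 1 - (2 - 2 * s) / q < 1 := sub_lt_self _ (div_pos (by linarith) hq)
  have key := lintegral_gagliardo_norm_rpow_neg_lt_top (μ := volume)
    (E := EuclideanSpace ℝ (Fin N)) (α := N - 2 * s) (by rw [hfinrank]; omega) (by linarith) hη₀ hη₁ hq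
    (by rwa [hfinrank]) 1
  rwa [hfinrank, ← Measure.volume_eq_prod] at key
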